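/- arXiv:1306.5054 — 2 statements merged into one kernel-verified Lean document; each statement's English description precedes it below -/
import Mathlib

section
/- Fix q ∈ ℝ² with B(q) ≠ 0, let DA(q) denote the Jacobian of A at q and ᵗDA(q) its transpose, and let e₁=(1,0), e₂=(0,1). Define u₁ := |B(q)|^{-1/2}·(e₁, ᵗDA(q)e₁) ∈ ℝ⁴ and v₁ := (|B(q)|^{1/2}/B(q))·(e₂, ᵗDA(q)e₂) ∈ ℝ⁴. Then: (i) u₁ and v₁ are ω-orthogonal to the tangent space T_{j(q)}Σ = {(Q, DA(q)Q) : Q ∈ ℝ²}, i.e. ω((Q, DA(q)Q), u₁) = 0 and ω((Q, DA(q)Q), v₁) = 0 for all Q ∈ ℝ²; (ii) ω(u₁, v₁) = −1. Hence (u₁, v₁) is a symplectic basis of the symplectic orthogonal complement T_{j(q)}Σ^⊥. -/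
noncomputable section

/-- canonical symplectic form on `ℝ⁴ = ℝ²_q × ℝ²_p`:
`ω((Q₁,P₁),(Q₂,P₂)) = ⟨P₁,Q₂⟩ − ⟨P₂,Q₁⟩`. -/
def omega (v w : (ℝ × ℝ) × (ℝ × ℝ)) : ℝ :=
  (v.2.1 * w.1.1 + v.2.2 * w.1.2) - (w.2.1 * v.1.1 + w.2.2 * v.1.2)

/-- the magnetic field `B = ∂A₂/∂q₁ − ∂A₁/∂q₂` -/
def magB (A : ℝ × ℝ → ℝ × ℝ) (q : ℝ × ℝ) : ℝ :=
  (fderiv ℝ A q (1, 0)).2 - (fderiv ℝ A q (0, 1)).1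

/-- the transposed Jacobian `ᵗDA(q)` applied to `Q` -/
def transDA (A : ℝ × ℝ → ℝ × ℝ) (q Q : ℝ × ℝ) : ℝ × ℝ :=
  ((fderiv ℝ A q (1, 0)).1 * Q.1 + (fderiv ℝ A q (1, 0)).2 * Q.2,
   (fderiv ℝ A q (0, 1)).1 * Q.1 + (fderiv ℝ A q (0, 1)).2 * Q.2)

lemma fderiv_decomp (A : ℝ × ℝ → ℝ × ℝ) (q Q : ℝ × ℝ) :
    fderiv ℝ A q Q
      = Q.1 • fderiv ℝ A q (1, 0) + Q.2 • fderiv ℝ A q (0, 1) := by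
  have hQ : Q = Q.1 • ((1:ℝ), (0:ℝ)) + Q.2 • ((0:ℝ), (1:ℝ)) := by
    ext <;> simp
  conv_lhs => rw [hQ]
  rw [map_add, map_smul, map_smul]

/-- `(u₁, v₁)` is a symplectic basis of the symplectic orthogonal complement
`T_{j(q)}Σ^⊥`, where `u₁ = |B|^{-1/2}(e₁, ᵗDA e₁)` and
`v₁ = (|B|^{1/2}/B)(e₂, ᵗDA e₂)`. -/
theorem symplectic_basis_of_normal_bundle
    (A : ℝ × ℝ → ℝ × ℝ) (hA : ContDiff ℝ (⊤ : ℕ∞) A)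
    (q : ℝ × ℝ) (hB : magB A q ≠ 0) :
    letI u₁ : (ℝ × ℝ) × (ℝ × ℝ) :=
      (Real.sqrt |magB A q|)⁻¹ • ((((1:ℝ), (0:ℝ)), transDA A q (1, 0)))
    letI v₁ : (ℝ × ℝ) × (ℝ × ℝ) :=
      (Real.sqrt |magB A q| / magB A q) • ((((0:ℝ), (1:ℝ)), transDA A q (0, 1)))
    (∀ Q : ℝ × ℝ, omega (Q, fderiv ℝ A q Q) u₁ = 0) ∧
    (∀ Q : ℝ × ℝ, omega (Q, fderiv ℝ A q Q) v₁ = 0) ∧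
    omega u₁ v₁ = -1 := by
  have hs : Real.sqrt |magB A q| ≠ 0 := by
    positivity
  have hsq : Real.sqrt |magB A q| * Real.sqrt |magB A q| = |magB A q| := by
    exact Real.mul_self_sqrt (abs_nonneg _)
  refine ⟨?_, ?_, ?_⟩
  · intro Q
    simp only [omega, transDA, Prod.smul_fst, Prod.smul_snd, smul_eq_mul,
      Prod.fst, Prod.snd, fderiv_decomp A q Q, Prod.smul_mk, Prod.mk_add_mk,
      Prod.fst_add, Prod.snd_add]
    ring
  · intro Q
    simp only [omega, transDA, Prod.smul_fst, Prod.smul_snd, smul_eq_mul,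
      fderiv_decomp A q Q, Prod.fst_add, Prod.snd_add]
    ring
  · simp only [omega, transDA, Prod.smul_fst, Prod.smul_snd, smul_eq_mul]
    have hmB : (fderiv ℝ A q (0,1)).1 - (fderiv ℝ A q (1,0)).2 = -magB A q := by
      simp only [magB]; ring
    field_simp
    linear_combination hmB
end
end

section
/- Fix q ∈ ℝ² with B(q) ≠ 0 and let u₁ := |B(q)|^{-1/2}·(e₁, ᵗDA(q)e₁), v₁ := (|B(q)|^{1/2}/B(q))·(e₂, ᵗDA(q)e₂), where DA(q) is the Jacobian of A at q, ᵗDA(q) its transpose, and e₁=(1,0), e₂=(0,1). Then the Hessian of H at j(q) in the basis (u₁, v₁) is the diagonal matrix diag(2|B(q)|, 2|B(q)|): namely D²H(j(q))[u₁,u₁] = 2|B(q)|, D²H(j(q))[v₁,v₁] = 2|B(q)|, and D²H(j(q))[u₁,v₁] = 0. -/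
noncomputable section

/-- squared Euclidean norm on `ℝ²` -/
def sqnorm (v : ℝ × ℝ) : ℝ := v.1 ^ 2 + v.2 ^ 2

/-- the magnetic Hamiltonian `H(q,p) = ‖p − A(q)‖²` -/
def magH (A : ℝ × ℝ → ℝ × ℝ) (z : (ℝ × ℝ) × (ℝ × ℝ)) : ℝ :=
  sqnorm (z.2 - A z.1)

namespace MagHessAux

abbrev E : Type := (ℝ × ℝ) × (ℝ × ℝ)

/-- derivative of `z ↦ z.2 - A z.1` -/
def Dm (A : ℝ × ℝ → ℝ × ℝ) (z : E) : E →L[ℝ] ℝ × ℝ :=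
  ContinuousLinearMap.snd ℝ (ℝ × ℝ) (ℝ × ℝ) -
    (fderiv ℝ A z.1).comp (ContinuousLinearMap.fst ℝ (ℝ × ℝ) (ℝ × ℝ))

/-- derivative of `sqnorm` at `v` -/
def Nc (v : ℝ × ℝ) : (ℝ × ℝ) →L[ℝ] ℝ :=
  (2 * v.1) • ContinuousLinearMap.fst ℝ ℝ ℝ + (2 * v.2) • ContinuousLinearMap.snd ℝ ℝ ℝ

lemma contDiff_sqnorm : ContDiff ℝ (⊤ : ℕ∞) sqnorm :=
  (contDiff_fst.pow 2).add (contDiff_snd.pow 2)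

lemma hasFDerivAt_sqnorm (v : ℝ × ℝ) : HasFDerivAt sqnorm (Nc v) v := by
  have hfun : sqnorm = fun v : ℝ × ℝ => v.1 * v.1 + v.2 * v.2 := by
    funext v; simp [sqnorm]; ring
  rw [hfun]
  have h1 : HasFDerivAt (fun v : ℝ × ℝ => v.1) (ContinuousLinearMap.fst ℝ ℝ ℝ) v :=
    hasFDerivAt_fst
  have h2 : HasFDerivAt (fun v : ℝ × ℝ => v.2) (ContinuousLinearMap.snd ℝ ℝ ℝ) v :=
    hasFDerivAt_snd
  have h := (h1.mul h1).add (h2.mul h2)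
  refine h.congr_fderiv ?_
  ext w <;> simp [Nc] <;> ring

lemma hasFDerivAt_magH {A : ℝ × ℝ → ℝ × ℝ} (hA : ContDiff ℝ (⊤ : ℕ∞) A) (z : E) :
    HasFDerivAt (magH A) ((Nc (z.2 - A z.1)).comp (Dm A z)) z := by
  have hF : HasFDerivAt (fun z : E => z.2 - A z.1) (Dm A z) z := by
    exact (hasFDerivAt_snd).sub
      (((hA.differentiable (by simp) z.1).hasFDerivAt).comp z (hasFDerivAt_fst))
  exact (hasFDerivAt_sqnorm (z.2 - A z.1)).comp z hF

lemma fderiv_magH {A : ℝ × ℝ → ℝ × ℝ} (hA : ContDiff ℝ (⊤ : ℕ∞) A) :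
    fderiv ℝ (magH A) = fun z : E => (Nc (z.2 - A z.1)).comp (Dm A z) :=
  funext fun z => (hasFDerivAt_magH hA z).fderiv

lemma contDiff_magH {A : ℝ × ℝ → ℝ × ℝ} (hA : ContDiff ℝ (⊤ : ℕ∞) A) :
    ContDiff ℝ (⊤ : ℕ∞) (magH A) :=
  contDiff_sqnorm.comp (contDiff_snd.sub (hA.comp contDiff_fst))

/-- The key computation: the Hessian of `magH` at `(q, A q)` as an explicit bilinear form. -/
lemma key {A : ℝ × ℝ → ℝ × ℝ} (hA : ContDiff ℝ (⊤ : ℕ∞) A) (q : ℝ × ℝ) (w w' : E) :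
    fderiv ℝ (fderiv ℝ (magH A)) (q, A q) w w' =
      2 * (w.2.1 - (fderiv ℝ A q w.1).1) * (w'.2.1 - (fderiv ℝ A q w'.1).1) +
      2 * (w.2.2 - (fderiv ℝ A q w.1).2) * (w'.2.2 - (fderiv ℝ A q w'.1).2) := by
  set z₀ : E := (q, A q) with hz₀
  have hd : Differentiable ℝ (fderiv ℝ (magH A)) :=
    ((contDiff_magH hA).fderiv_right (m := (⊤ : ℕ∞)) (by simp)).differentiable (by simp)
  -- step 1 : evaluation through a fixed vector
  have h1 : fderiv ℝ (fun z : E => fderiv ℝ (magH A) z w') z₀ w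
      = fderiv ℝ (fderiv ℝ (magH A)) z₀ w w' := by
    rw [fderiv_clm_apply (hd z₀) (differentiableAt_const w')]
    simp
  rw [← h1]
  -- step 2 : the evaluated function is an explicit scalar function
  have heq : (fun z : E => fderiv ℝ (magH A) z w') =
      fun z : E => 2 * (z.2.1 - (A z.1).1) * (w'.2.1 - (fderiv ℝ A z.1 w'.1).1) +
        2 * (z.2.2 - (A z.1).2) * (w'.2.2 - (fderiv ℝ A z.1 w'.1).2) := by
    funext z
    rw [fderiv_magH hA]
    simp [Nc, Dm]
    ring
  rw [heq]
  -- step 3 : differentiate the scalar function at z₀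
  have hA' : ContDiff ℝ (⊤ : ℕ∞) (fderiv ℝ A) := hA.fderiv_right (by simp)
  have hk₁ : DifferentiableAt ℝ
      (fun z : E => w'.2.1 - (fderiv ℝ A z.1 w'.1).1) z₀ := by
    apply (differentiableAt_const _).sub
    exact (((((hA'.differentiable (by simp)).comp differentiable_fst) z₀).clm_apply
      (differentiableAt_const _)).fst)
  have hk₂ : DifferentiableAt ℝ
      (fun z : E => w'.2.2 - (fderiv ℝ A z.1 w'.1).2) z₀ := by
    apply (differentiableAt_const _).sub
    exact (((((hA'.differentiable (by simp)).comp differentiable_fst) z₀).clm_apply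
      (differentiableAt_const _)).snd)
  have hp₁ : HasFDerivAt (fun z : E => z.2.1 - (A z.1).1)
      ((ContinuousLinearMap.fst ℝ ℝ ℝ).comp (Dm A z₀)) z₀ := by
    have hF : HasFDerivAt (fun z : E => z.2 - A z.1) (Dm A z₀) z₀ :=
      (hasFDerivAt_snd).sub
        (((hA.differentiable (by simp) z₀.1).hasFDerivAt).comp z₀ (hasFDerivAt_fst))
    exact hF.fst
  have hp₂ : HasFDerivAt (fun z : E => z.2.2 - (A z.1).2)
      ((ContinuousLinearMap.snd ℝ ℝ ℝ).comp (Dm A z₀)) z₀ := by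
    have hF : HasFDerivAt (fun z : E => z.2 - A z.1) (Dm A z₀) z₀ :=
      (hasFDerivAt_snd).sub
        (((hA.differentiable (by simp) z₀.1).hasFDerivAt).comp z₀ (hasFDerivAt_fst))
    exact hF.snd
  have hg := (((hp₁.const_mul 2).mul hk₁.hasFDerivAt).add
    ((hp₂.const_mul 2).mul hk₂.hasFDerivAt))
  have hg' : HasFDerivAt (fun z : E => 2 * (z.2.1 - (A z.1).1) * (w'.2.1 - (fderiv ℝ A z.1 w'.1).1) +
      2 * (z.2.2 - (A z.1).2) * (w'.2.2 - (fderiv ℝ A z.1 w'.1).2)) _ z₀ := hg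
  rw [hg'.fderiv]
  simp [Dm, hz₀]
  ring

end MagHessAux

/-- In the symplectic basis `(u₁, v₁)` of `T_{j(q)}Σ^⊥`, the Hessian of `H`
at `j(q)` is the diagonal matrix `diag(2|B(q)|, 2|B(q)|)`. -/
theorem hessian_in_symplectic_basis
    (A : ℝ × ℝ → ℝ × ℝ) (hA : ContDiff ℝ (⊤ : ℕ∞) A)
    (q : ℝ × ℝ) (hB : magB A q ≠ 0) :
    letI u₁ : (ℝ × ℝ) × (ℝ × ℝ) :=
      (Real.sqrt |magB A q|)⁻¹ • ((((1:ℝ), (0:ℝ)), transDA A q (1, 0)))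
    letI v₁ : (ℝ × ℝ) × (ℝ × ℝ) :=
      (Real.sqrt |magB A q| / magB A q) • ((((0:ℝ), (1:ℝ)), transDA A q (0, 1)))
    fderiv ℝ (fderiv ℝ (magH A)) (q, A q) u₁ u₁ = 2 * |magB A q| ∧
    fderiv ℝ (fderiv ℝ (magH A)) (q, A q) v₁ v₁ = 2 * |magB A q| ∧
    fderiv ℝ (fderiv ℝ (magH A)) (q, A q) u₁ v₁ = 0 := by
  have hBne : |magB A q| ≠ 0 := abs_ne_zero.mpr hB
  have hBpos : (0:ℝ) < |magB A q| := abs_pos.mpr hB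
  have hsq : Real.sqrt |magB A q| * Real.sqrt |magB A q| = |magB A q| :=
    Real.mul_self_sqrt (abs_nonneg _)
  have habs : magB A q * magB A q = |magB A q| * |magB A q| := by
    rcases abs_cases (magB A q) with ⟨h, _⟩ | ⟨h, _⟩ <;> rw [h] <;> ring
  have hsne : Real.sqrt |magB A q| ≠ 0 := (Real.sqrt_pos.mpr hBpos).ne'
  simp only [magB] at hB hsq habs hsne
  refine ⟨?_, ?_, ?_⟩ <;>
    rw [MagHessAux.key hA q] <;>
    simp only [Prod.smul_fst, Prod.smul_snd, map_smul, smul_eq_mul,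
      transDA, magB, mul_one, mul_zero, add_zero, zero_add]
  · field_simp
    nlinarith [hsq, habs]
  · field_simp
    nlinarith [hsq, habs]
  · ring_nf

end
end
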